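/- arXiv:1302.4694 — 2 statements merged into one kernel-verified Lean document; each statement's English description precedes it below -/
import Mathlib

section
/- Let K be a commutative ring with unity, let v, w : ℤ → K, and let α, β ∈ ℤ. For all integers 0 ≤ k ≤ n, the V-Stirling numbers of the second kind satisfy the horizontal recurrence S^V_{α,β}[n,k] = ∑_{j=0}^{n-k} (-1)^{j} · (∏_{t=1}^{j} v(α+k+t)·w(β-t)) · S^V_{α,β-j-1}[n+1,k+j+1]. -/
open Finset Polynomial

variable {K : Type*} [CommRing K]

/-- Elementary symmetric function `e_t` of the entries of a list. -/
def esymmList : List K → ℕ → K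
  | _, 0 => 1
  | [], _ + 1 => 0
  | a :: l, t + 1 => a * esymmList l t + esymmList l (t + 1)

/-- Complete homogeneous symmetric function `h_t` of the entries of a list. -/
def hsymmList : List K → ℕ → K
  | _, 0 => 1
  | [], _ + 1 => 0
  | a :: l, t + 1 => a * hsymmList (a :: l) t + hsymmList l (t + 1)
  termination_by l t => (l.length, t)

/-- The V-Stirling number of the first kind
`c^V_{α,β}[n,k] = e_{n-k}(v(α+n-1)w(β), …, v(α)w(β+n-1))`,
set to `0` unless `0 ≤ k ≤ n`. -/
def cV (v w : ℤ → K) (α β n k : ℤ) : K :=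
  if 0 ≤ k ∧ k ≤ n then
    esymmList (List.ofFn fun j : Fin n.toNat =>
      v (α + n - 1 - (j : ℕ)) * w (β + (j : ℕ))) (n - k).toNat
  else 0

/-- The V-Stirling number of the second kind
`S^V_{α,β}[n,k] = h_{n-k}(v(α+k)w(β), …, v(α)w(β+k))`,
set to `0` unless `0 ≤ k ≤ n`. -/
def SV (v w : ℤ → K) (α β n k : ℤ) : K :=
  if 0 ≤ k ∧ k ≤ n then
    hsymmList (List.ofFn fun j : Fin (k.toNat + 1) =>
      v (α + k - (j : ℕ)) * w (β + (j : ℕ))) (n - k).toNat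
  else 0

lemma hsymmList_zero (l : List K) : hsymmList l 0 = 1 := by
  cases l <;> rw [hsymmList]

lemma hsymmList_cons (a : K) (l : List K) (t : ℕ) :
    hsymmList (a :: l) (t + 1) = a * hsymmList (a :: l) t + hsymmList l (t + 1) := by
  rw [hsymmList]

lemma telescope (b : ℕ → K) (g : ℕ → List K) (hg : ∀ d, g (d + 1) = b (d + 1) :: g d) :
    ∀ (s m : ℕ), hsymmList (g m) s = ∑ j ∈ Finset.range (s + 1),
      (-1 : K) ^ j * (∏ t ∈ Finset.range j, b (m + 1 + t)) * hsymmList (g (m + j + 1)) (s - j) := by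
  intro s
  induction s with
  | zero => intro m; simp [hsymmList_zero]
  | succ s ih =>
    intro m
    rw [Finset.sum_range_succ']
    simp only [Nat.sub_zero, pow_zero, Finset.range_zero, Finset.prod_empty, one_mul,
      Nat.succ_sub_succ]
    have key : hsymmList (g (m + 1)) (s + 1) =
        b (m + 1) * hsymmList (g (m + 1)) s + hsymmList (g m) (s + 1) := by
      rw [hg m] at *
      exact hsymmList_cons _ _ _
    have sum_eq : ∑ j ∈ Finset.range (s + 1),
        (-1 : K) ^ (j + 1) * (∏ t ∈ Finset.range (j + 1), b (m + 1 + t)) *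
          hsymmList (g (m + (j + 1) + 1)) (s - j)
        = - (b (m + 1) * ∑ j ∈ Finset.range (s + 1),
            (-1 : K) ^ j * (∏ t ∈ Finset.range j, b (m + 1 + 1 + t)) *
              hsymmList (g (m + 1 + j + 1)) (s - j)) := by
      rw [Finset.mul_sum, ← Finset.sum_neg_distrib]
      apply Finset.sum_congr rfl
      intro j _
      rw [Finset.prod_range_succ']
      have h1 : (∏ t ∈ Finset.range j, b (m + 1 + (t + 1))) =
          ∏ t ∈ Finset.range j, b (m + 1 + 1 + t) := by
        apply Finset.prod_congr rfl
        intro t _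
        congr 1
        omega
      have h2 : m + (j + 1) + 1 = m + 1 + j + 1 := by omega
      rw [h1, h2]
      ring
    rw [sum_eq, ← ih (m + 1), key]
    ring

theorem SV_horizontal_recurrence (v w : ℤ → K) (α β : ℤ) (n k : ℕ) (hkn : k ≤ n) :
    SV v w α β (n : ℕ) (k : ℕ) =
      ∑ j ∈ Finset.range (n - k + 1),
        (-1 : K) ^ j * (∏ t ∈ Finset.Icc 1 j, v (α + (k : ℕ) + (t : ℕ)) * w (β - (t : ℕ))) *
          SV v w α (β - (j : ℕ) - 1) ((n : ℕ) + 1) ((k : ℕ) + (j : ℕ) + 1) := by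
  have hg : ∀ d : ℕ, (fun d : ℕ => List.ofFn fun i : Fin (k + d + 1) =>
        v (α + (k : ℕ) + (d : ℕ) - (i : ℕ)) * w (β - (d : ℕ) + (i : ℕ))) (d + 1) =
      (fun t : ℕ => v (α + (k : ℕ) + (t : ℕ)) * w (β - (t : ℕ))) (d + 1) ::
      (fun d : ℕ => List.ofFn fun i : Fin (k + d + 1) =>
        v (α + (k : ℕ) + (d : ℕ) - (i : ℕ)) * w (β - (d : ℕ) + (i : ℕ))) d := by
    intro d
    simp only
    rw [List.ofFn_succ]
    congr 1
    · simp only [Fin.val_zero]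
      congr 1 <;> congr 1 <;> push_cast <;> omega
    · apply congrArg
      funext i
      simp only [Fin.val_succ]
      congr 1 <;> congr 1 <;> push_cast <;> omega
  have key := telescope (fun t : ℕ => v (α + (k : ℕ) + (t : ℕ)) * w (β - (t : ℕ)))
    (fun d : ℕ => List.ofFn fun i : Fin (k + d + 1) =>
        v (α + (k : ℕ) + (d : ℕ) - (i : ℕ)) * w (β - (d : ℕ) + (i : ℕ))) hg (n - k) 0
  have hL : SV v w α β (n : ℕ) (k : ℕ) = hsymmList (List.ofFn fun i : Fin (k + 0 + 1) =>
      v (α + (k : ℕ) + ((0 : ℕ) : ℤ) - (i : ℕ)) * w (β - ((0 : ℕ) : ℤ) + (i : ℕ))) (n - k) := by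
    rw [SV, if_pos ⟨Int.ofNat_nonneg k, by exact_mod_cast hkn⟩]
    have hdeg : ((n : ℤ) - (k : ℕ)).toNat = n - k := by omega
    rw [hdeg]
    congr 1
    apply List.ext_getElem
    · simp
    · intro i h1 h2
      simp only [List.getElem_ofFn]
      congr 1 <;> congr 1 <;> push_cast <;> omega
  rw [hL, key]
  apply Finset.sum_congr rfl
  intro j hj
  have hjle : j ≤ n - k := by simp at hj; omega
  congr 1
  · congr 1
    rw [show Finset.Icc 1 j = Finset.Ico 1 (j + 1) from rfl, Finset.prod_Ico_eq_prod_range]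
    apply Finset.prod_congr
    · congr 1
    · intro t _
      congr 1 <;> congr 1 <;> push_cast <;> omega
  · rw [SV, if_pos ⟨by positivity, by push_cast; omega⟩]
    have hdeg : ((n : ℤ) + 1 - ((k : ℕ) + (j : ℕ) + 1)).toNat = n - k - j := by omega
    rw [hdeg]
    congr 1
    apply List.ext_getElem
    · simp only [List.length_ofFn]; omega
    · intro i h1 h2
      simp only [List.getElem_ofFn]
      congr 1 <;> congr 1 <;> push_cast <;> omega
end

section
/- Let K be a commutative ring with unity, let v, w : ℤ → K, and let α, β ∈ ℤ. For all natural numbers m ≤ n, the orthogonality relation ∑_{k=m}^{n} (-1)^{n-k} · c^V_{α,β+m+1}[n,k] · S^V_{α,β+n}[k,m] = δ_{n,m} holds, where δ_{n,m} is the Kronecker delta (equal to 1 in K if n = m and 0 otherwise). -/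
open Finset Polynomial

variable {K : Type*} [CommRing K]

lemma esymmList_zero (l : List K) : esymmList l 0 = 1 := by cases l <;> rfl

lemma hsymmList_nil_succ (t : ℕ) : hsymmList ([] : List K) (t+1) = 0 := by rw [hsymmList]

lemma hsymmList_cons_succ (a : K) (l : List K) (t : ℕ) :
    hsymmList (a :: l) (t+1) = a * hsymmList (a :: l) t + hsymmList l (t+1) := by rw [hsymmList]

lemma esymmList_cons_succ (a : K) (l : List K) (t : ℕ) :
    esymmList (a :: l) (t+1) = a * esymmList l t + esymmList l (t+1) := rfl

lemma esymmList_eq_zero : ∀ (l : List K) (t : ℕ), l.length < t → esymmList l t = 0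
  | [], _+1, _ => rfl
  | a :: l, t+1, h => by
    have h1 : l.length < t := by simpa using h
    rw [esymmList_cons_succ, esymmList_eq_zero l t h1,
      esymmList_eq_zero l (t+1) (Nat.lt_succ_of_lt h1), mul_zero, add_zero]

/-- The convolution `∑_t (-1)^t e_t(l) h_{s-t}(l')`. -/
def Gsum (l l' : List K) (s : ℕ) : K :=
  ∑ t ∈ Finset.range (s+1), (-1 : K)^t * esymmList l t * hsymmList l' (s - t)

lemma Gsum_zero (l l' : List K) : Gsum l l' 0 = 1 := by
  simp [Gsum, esymmList_zero, hsymmList_zero]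

lemma Gsum_cons_left (b : K) (l l' : List K) (s : ℕ) :
    Gsum (b :: l) l' (s+1) = Gsum l l' (s+1) - b * Gsum l l' s := by
  unfold Gsum
  rw [Finset.sum_range_succ' (fun t => (-1 : K)^t * esymmList (b :: l) t * hsymmList l' (s+1-t)),
    Finset.sum_range_succ' (fun t => (-1 : K)^t * esymmList l t * hsymmList l' (s+1-t))]
  have hterm : ∀ t ∈ Finset.range (s+1),
      (-1 : K)^(t+1) * esymmList (b :: l) (t+1) * hsymmList l' (s+1-(t+1))
        = (-1 : K)^(t+1) * esymmList l (t+1) * hsymmList l' (s+1-(t+1))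
          - b * ((-1 : K)^t * esymmList l t * hsymmList l' (s - t)) := by
    intro t _
    have : s + 1 - (t + 1) = s - t := by omega
    rw [this, esymmList_cons_succ]
    ring
  rw [Finset.sum_congr rfl hterm, Finset.sum_sub_distrib, ← Finset.mul_sum]
  simp only [esymmList_zero]
  ring

lemma Gsum_cons_right (a : K) (l l' : List K) (s : ℕ) :
    Gsum l (a :: l') (s+1) = a * Gsum l (a :: l') s + Gsum l l' (s+1) := by
  unfold Gsum
  rw [Finset.sum_range_succ (fun t => (-1 : K)^t * esymmList l t * hsymmList (a :: l') (s+1-t)),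
    Finset.sum_range_succ (fun t => (-1 : K)^t * esymmList l t * hsymmList l' (s+1-t))]
  have hterm : ∀ t ∈ Finset.range (s+1),
      (-1 : K)^t * esymmList l t * hsymmList (a :: l') (s+1-t)
        = a * ((-1 : K)^t * esymmList l t * hsymmList (a :: l') (s - t))
          + (-1 : K)^t * esymmList l t * hsymmList l' (s+1-t) := by
    intro t ht
    have ht' : t ≤ s := by simpa [Nat.lt_succ_iff] using ht
    have h1 : s + 1 - t = (s - t) + 1 := by omega
    rw [h1, hsymmList_cons_succ]
    ring
  rw [Finset.sum_congr rfl hterm, Finset.sum_add_distrib, ← Finset.mul_sum]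
  have hlast : (s + 1) - (s + 1) = 0 := by omega
  rw [hlast, hsymmList_zero, hsymmList_zero]
  ring

lemma Gsum_cons_cons (a : K) (l l' : List K) (s : ℕ) :
    Gsum (a :: l) (a :: l') s = Gsum l l' s := by
  cases s with
  | zero => rw [Gsum_zero, Gsum_zero]
  | succ s =>
    rw [Gsum_cons_left, Gsum_cons_right]
    ring

lemma Gsum_self_succ : ∀ (l : List K) (s : ℕ), Gsum l l (s+1) = 0
  | [], s => by
    unfold Gsum
    apply Finset.sum_eq_zero
    intro t ht
    cases t with
    | zero => simp [esymmList_zero, hsymmList_nil_succ]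
    | succ t => simp [esymmList]
  | a :: l, s => by rw [Gsum_cons_cons, Gsum_self_succ l s]

lemma Gsum_append : ∀ (r l' : List K) (s : ℕ), Gsum (r ++ l') l' s = (-1)^s * esymmList r s
  | [], l', 0 => by simp [Gsum_zero, esymmList_zero]
  | [], l', s+1 => by
    rw [List.nil_append, Gsum_self_succ, esymmList_eq_zero [] (s+1) (by simp), mul_zero]
  | b :: r, l', 0 => by rw [Gsum_zero, esymmList_zero, pow_zero, mul_one]
  | b :: r, l', s+1 => by
    rw [List.cons_append, Gsum_cons_left, Gsum_append r l' (s+1), Gsum_append r l' s,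
      esymmList_cons_succ, pow_succ]
    ring

lemma cV_nat (v w : ℤ → K) (α β : ℤ) (n k : ℕ) (h : k ≤ n) :
    cV v w α β (n : ℕ) (k : ℕ) =
      esymmList (List.ofFn fun j : Fin n =>
        v (α + (n : ℕ) - 1 - (j : ℕ)) * w (β + (j : ℕ))) (n - k) := by
  rw [cV, if_pos ⟨Int.natCast_nonneg k, by exact_mod_cast h⟩]
  have h1 : ((n : ℤ) - (k : ℤ)).toNat = n - k := by omega
  rw [h1]; exact rfl

lemma SV_nat (v w : ℤ → K) (α β : ℤ) (n k : ℕ) (h : k ≤ n) :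
    SV v w α β (n : ℕ) (k : ℕ) =
      hsymmList (List.ofFn fun j : Fin (k + 1) =>
        v (α + (k : ℕ) - (j : ℕ)) * w (β + (j : ℕ))) (n - k) := by
  rw [SV, if_pos ⟨Int.natCast_nonneg k, by exact_mod_cast h⟩]
  have h1 : ((n : ℤ) - (k : ℤ)).toNat = n - k := by omega
  rw [h1]; exact rfl

theorem cV_SV_orthogonality (v w : ℤ → K) (α β : ℤ) (m n : ℕ) (hmn : m ≤ n) :
    ∑ k ∈ Finset.Icc m n,
        (-1 : K) ^ (n - k) * cV v w α (β + (m : ℕ) + 1) (n : ℕ) (k : ℕ) *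
          SV v w α (β + (n : ℕ)) (k : ℕ) (m : ℕ) =
      if n = m then 1 else 0 := by
  rcases eq_or_lt_of_le hmn with rfl | hlt
  · rw [Finset.Icc_self, Finset.sum_singleton, if_pos rfl,
      cV_nat v w α _ m m le_rfl, SV_nat v w α _ m m le_rfl]
    simp [esymmList_zero, hsymmList_zero]
  · have hne : ¬ n = m := by omega
    rw [if_neg hne]
    set s : ℕ := n - m with hs
    set L : List K := List.ofFn fun j : Fin n =>
      v (α + (n : ℕ) - 1 - (j : ℕ)) * w (β + (m : ℕ) + 1 + (j : ℕ)) with hLdef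
    set L' : List K := List.ofFn fun j : Fin (m + 1) =>
      v (α + (m : ℕ) - (j : ℕ)) * w (β + (n : ℕ) + (j : ℕ)) with hL'def
    set r : List K := List.ofFn fun j : Fin (n - (m + 1)) =>
      v (α + (n : ℕ) - 1 - (j : ℕ)) * w (β + (m : ℕ) + 1 + (j : ℕ)) with hrdef
    have hL : L = r ++ L' := by
      apply List.ext_getElem
      · simp only [hLdef, hrdef, hL'def, List.length_ofFn, List.length_append]
        omega
      · intro i h1 h2
        simp only [hLdef, hrdef, hL'def, List.getElem_ofFn, List.getElem_append,
          List.length_ofFn]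
        split_ifs with h
        · rfl
        · congr 2 <;> omega
    have key : ∑ k ∈ Finset.Icc m n,
        (-1 : K) ^ (n - k) * cV v w α (β + (m : ℕ) + 1) (n : ℕ) (k : ℕ) *
          SV v w α (β + (n : ℕ)) (k : ℕ) (m : ℕ) = Gsum L L' s := by
      rw [show Finset.Icc m n = Finset.Ico m (n+1) by rw [Finset.Ico_add_one_right_eq_Icc],
        Finset.sum_Ico_eq_sum_range, show n + 1 - m = s + 1 by omega,
        ← Finset.sum_range_reflect]
      apply Finset.sum_congr rfl
      intro t ht
      have ht' : t ≤ s := by simpa [Nat.lt_succ_iff] using ht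
      have hk : m + (s + 1 - 1 - t) = n - t := by omega
      rw [hk]
      have h1 : n - t ≤ n := by omega
      have h2 : m ≤ n - t := by omega
      rw [cV_nat v w α _ n (n - t) h1, SV_nat v w α _ (n - t) m h2,
        show n - (n - t) = t by omega, show (n - t) - m = s - t by omega]
    rw [key, hL, Gsum_append, esymmList_eq_zero, mul_zero]
    simp only [hrdef, List.length_ofFn]
    omega
end
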